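/- The Laplace mechanism M(x) = f(x) + ξ with ξ ~ Laplace(0, Δ/ε), where Δ = sup_{x,x'∈U} |f(x) − f(x')| is the sensitivity of f over a set U, satisfies: for all x, x' ∈ U and all measurable S ⊆ ℝ, P(M(x) ∈ S) ≤ e^ε · P(M(x') ∈ S). -/
import Mathlib


open MeasureTheory Real

/-- The Laplace distribution with mean 0 and scale `b`. -/
noncomputable def laplace (b : ℝ) : Measure ℝ :=
  volume.withDensity (fun t => ENNReal.ofReal ((1 / (2 * b)) * Real.exp (-|t| / b)))

lemma laplace_map_apply (b c : ℝ) (S : Set ℝ) (hS : MeasurableSet S) :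
    (laplace b).map (fun t => c + t) S
      = ∫⁻ s in S, ENNReal.ofReal ((1 / (2 * b)) * Real.exp (-|s - c| / b)) := by
  have hpre : MeasurableSet ((fun t : ℝ => c + t) ⁻¹' S) := hS.preimage (measurable_const_add c)
  rw [Measure.map_apply (measurable_const_add c) hS]
  unfold laplace
  rw [withDensity_apply _ hpre]
  rw [← lintegral_indicator hpre, ← lintegral_indicator hS]
  have key : ∀ t : ℝ,
      Set.indicator ((fun t : ℝ => c + t) ⁻¹' S)
        (fun t => ENNReal.ofReal ((1 / (2 * b)) * Real.exp (-|t| / b))) t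
      = Set.indicator S
        (fun s => ENNReal.ofReal ((1 / (2 * b)) * Real.exp (-|s - c| / b))) (c + t) := by
    intro t
    by_cases h : c + t ∈ S <;>
      simp [Set.indicator, h, Set.mem_preimage, add_sub_cancel_left]
  simp_rw [key]
  exact lintegral_add_left_eq_self
    (Set.indicator S fun s => ENNReal.ofReal ((1 / (2 * b)) * Real.exp (-|s - c| / b))) c

/-- The Laplace mechanism `M(x) = f(x) + ξ` with `ξ ~ Laplace(0, Δ/ε)`, where
`Δ = sup_{x,x'∈U} |f(x) − f(x')|` is the sensitivity of `f` over `U`, satisfies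
`P(M(x) ∈ S) ≤ e^ε · P(M(x') ∈ S)` for all `x, x' ∈ U` and measurable `S`. -/
theorem laplace_mechanism_dp
    {X : Type*} (f : X → ℝ) (U : Set X) (ε Δ : ℝ) (hε : 0 < ε)
    (hΔ : Δ = sSup {d : ℝ | ∃ x ∈ U, ∃ x' ∈ U, d = |f x - f x'|}) :
    ∀ x ∈ U, ∀ x' ∈ U, ∀ S : Set ℝ, MeasurableSet S →
      (laplace (Δ / ε)).map (fun t => f x + t) S ≤
        ENNReal.ofReal (Real.exp ε) * (laplace (Δ / ε)).map (fun t => f x' + t) S := by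
  intro x hx x' hx' S hS
  by_cases hΔ0 : Δ = 0
  · have hzero : laplace (Δ / ε) = 0 := by
      unfold laplace
      rw [hΔ0, zero_div]
      simp
    simp [hzero]
  · have hbdd : BddAbove {d : ℝ | ∃ x ∈ U, ∃ x' ∈ U, d = |f x - f x'|} := by
      by_contra h
      exact hΔ0 (hΔ.trans (Real.sSup_of_not_bddAbove h))
    have h0mem : (0 : ℝ) ∈ {d : ℝ | ∃ x ∈ U, ∃ x' ∈ U, d = |f x - f x'|} :=
      ⟨x, hx, x, hx, by simp⟩
    have hΔnonneg : 0 ≤ Δ := hΔ ▸ le_csSup hbdd h0mem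
    have hΔpos : 0 < Δ := lt_of_le_of_ne hΔnonneg (Ne.symm hΔ0)
    have hle : |f x - f x'| ≤ Δ := hΔ ▸ le_csSup hbdd ⟨x, hx, x', hx', rfl⟩
    have hb : 0 < Δ / ε := div_pos hΔpos hε
    set b := Δ / ε with hbdef
    rw [laplace_map_apply b (f x) S hS, laplace_map_apply b (f x') S hS]
    have hg' : Measurable fun s : ℝ =>
        ENNReal.ofReal ((1 / (2 * b)) * Real.exp (-|s - f x'| / b)) := by fun_prop
    rw [← lintegral_const_mul _ hg']
    refine lintegral_mono fun s => ?_
    rw [← ENNReal.ofReal_mul (Real.exp_nonneg ε), ← mul_assoc]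
    apply ENNReal.ofReal_le_ofReal
    rw [mul_comm (Real.exp ε) (1 / (2 * b)), mul_assoc]
    apply mul_le_mul_of_nonneg_left _ (by positivity)
    rw [← Real.exp_add]
    apply Real.exp_le_exp.mpr
    have key : |s - f x'| - |s - f x| ≤ Δ := by
      calc |s - f x'| - |s - f x| ≤ |(s - f x') - (s - f x)| := abs_sub_abs_le_abs_sub _ _
        _ = |f x - f x'| := by ring_nf
        _ ≤ Δ := hle
    have hεb : Δ = ε * b := by
      rw [hbdef]; field_simp
    have h2 : (|s - f x'| - |s - f x|) / b ≤ ε := by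
      rw [div_le_iff₀ hb]; linarith
    have hsub := sub_div (|s - f x'|) (|s - f x|) b
    rw [neg_div, neg_div]
    linarith
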